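/- Let D = d+1 and let A be a D×D real matrix such that (i) for every x ∈ ℝ^D with x₁+⋯+x_D = 1, the D-th coordinate of Ax equals 1, and (ii) A preserves orthogonality (orthogonal vectors map to orthogonal vectors). Let L_D = A(ℤ^D), H_k = {z ∈ L_D : z_D = k}, H'_k = {z ∈ ℝ^d : (z,k) ∈ H_k}, and v_i = A e_i = (v'_i, 1) for the standard basis e_1,…,e_D. Then each v'_i ∈ ℝ^d has Euclidean length √(D−1), and H'_{k+1} = {v'_i + x : x ∈ H'_k, 1 ≤ i ≤ D}. -/

import Mathlib

open scoped RealInnerProductSpace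

/-- Projection of `ℝ^{d+1}` onto the first `d` coordinates. -/
def projFirst (d : ℕ) (z : EuclideanSpace ℝ (Fin (d + 1))) : EuclideanSpace ℝ (Fin d) :=
  WithLp.toLp 2 (fun j : Fin d => z j.castSucc)

/-!
The images `vᵢ = A eᵢ` are pairwise orthogonal, and they all have the same length `r`, because
`eᵢ + eⱼ ⊥ eᵢ - eⱼ` forces `Aeᵢ + Aeⱼ ⊥ Aeᵢ - Aeⱼ`. So `r⁻¹ vᵢ` is an orthonormal basis, and
Parseval applied to the last basis vector `e_D`, whose inner product with every `vᵢ` is the last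
coordinate `1`, gives `r² = D`; removing the last coordinate leaves `‖v'ᵢ‖² = D - 1`.
The slice statement is bookkeeping: `A(m + eᵢ) = Am + vᵢ` raises the level by one.
-/

section Orthogonality

variable {E F : Type*} [NormedAddCommGroup E] [InnerProductSpace ℝ E]
  [NormedAddCommGroup F] [InnerProductSpace ℝ F]

theorem LinearMap.norm_map_eq_of_norm_eq (A : E →ₗ[ℝ] F)
    (hA : ∀ x y, ⟪x, y⟫ = 0 → ⟪A x, A y⟫ = 0) {x y : E} (h : ‖x‖ = ‖y‖) :
    ‖A x‖ = ‖A y‖ := by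
  rw [← real_inner_add_sub_eq_zero_iff] at h ⊢
  simpa only [map_add, map_sub] using hA _ _ h

theorem sum_sq_inner_eq_of_pairwise_inner_eq_zero [FiniteDimensional ℝ E] {ι : Type*}
    [Fintype ι] {v : ι → E} {r : ℝ} (hr : 0 < r) (horth : Pairwise fun i j => ⟪v i, v j⟫ = 0)
    (hnorm : ∀ i, ‖v i‖ = r) (hcard : Fintype.card ι = Module.finrank ℝ E) (x : E) :
    ∑ i, ⟪v i, x⟫ ^ 2 = r ^ 2 * ‖x‖ ^ 2 := by
  have hon : Orthonormal ℝ fun i => r⁻¹ • v i :=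
    ⟨fun i => by simp [norm_smul, hnorm, abs_of_pos hr, hr.ne'],
      fun i j hij => by simp [real_inner_smul_left, real_inner_smul_right, horth hij]⟩
  let b := OrthonormalBasis.mk hon (hon.linearIndependent.span_eq_top_of_card_eq_finrank' hcard).ge
  have hparseval := b.sum_sq_inner_right x
  simp only [b, OrthonormalBasis.coe_mk, real_inner_smul_left, mul_pow, ← Finset.mul_sum]
    at hparseval
  rw [← hparseval, ← mul_assoc, ← mul_pow, mul_inv_cancel₀ hr.ne', one_pow, one_mul]

end Orthogonality

section Euclidean

variable {d : ℕ}

theorem projFirst_add (z w : EuclideanSpace ℝ (Fin (d + 1))) :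
    projFirst d (z + w) = projFirst d z + projFirst d w := rfl

theorem norm_sq_eq_norm_projFirst_sq_add (z : EuclideanSpace ℝ (Fin (d + 1))) :
    ‖z‖ ^ 2 = ‖projFirst d z‖ ^ 2 + z (Fin.last d) ^ 2 := by
  simp [EuclideanSpace.norm_sq_eq, Fin.sum_univ_castSucc, projFirst]

theorem EuclideanSpace.toLp_intCast_add_single {ι : Type*} [DecidableEq ι]
    (m : ι → ℤ) (i : ι) :
    (WithLp.toLp 2 (fun j => ((m + Pi.single i 1 : ι → ℤ) j : ℝ)) : EuclideanSpace ℝ ι) =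
      WithLp.toLp 2 (fun j => (m j : ℝ)) + EuclideanSpace.single i 1 := by
  ext j
  by_cases h : j = i
  · subst h; simp
  · simp [h]

end Euclidean

section LatticeSlices

variable {d : ℕ} {A : EuclideanSpace ℝ (Fin (d + 1)) →ₗ[ℝ] EuclideanSpace ℝ (Fin (d + 1))}

/-- The slice `H'_c` of the lattice `A(ℤ^{d+1})` at height `c` in the last coordinate. -/
def latticeSlice (A : EuclideanSpace ℝ (Fin (d + 1)) →ₗ[ℝ] EuclideanSpace ℝ (Fin (d + 1)))
    (c : ℝ) : Set (EuclideanSpace ℝ (Fin d)) :=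
  {w | ∃ m : Fin (d + 1) → ℤ,
    A (WithLp.toLp 2 (fun i => (m i : ℝ))) (Fin.last d) = c ∧
      projFirst d (A (WithLp.toLp 2 (fun i => (m i : ℝ)))) = w}

theorem map_single_last (hA : ∀ x : EuclideanSpace ℝ (Fin (d + 1)), ∑ i, x i = 1 → A x (Fin.last d) = 1)
    (i : Fin (d + 1)) : A (EuclideanSpace.single i 1) (Fin.last d) = 1 :=
  hA _ (by simp)

theorem norm_map_single_sq (hA1 : ∀ i, A (EuclideanSpace.single i 1) (Fin.last d) = 1)
    (hA2 : ∀ x y, ⟪x, y⟫ = 0 → ⟪A x, A y⟫ = 0) (i : Fin (d + 1)) :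
    ‖A (EuclideanSpace.single i 1)‖ ^ 2 = d + 1 := by
  set v : Fin (d + 1) → EuclideanSpace ℝ (Fin (d + 1)) := fun i => A (EuclideanSpace.single i 1)
  set r := ‖v 0‖
  have hnorm : ∀ i, ‖v i‖ = r := fun i =>
    A.norm_map_eq_of_norm_eq hA2 (by simp)
  have horth : Pairwise fun i j => ⟪v i, v j⟫ = 0 := fun i j hij =>
    hA2 _ _ (by simp [EuclideanSpace.inner_single_left, Ne.symm hij])
  have hr : 0 < r := by
    refine norm_pos_iff.mpr fun h => ?_
    have hlast : v 0 (Fin.last d) = 1 := hA1 0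
    simp [h] at hlast
  have hparseval := sum_sq_inner_eq_of_pairwise_inner_eq_zero hr horth hnorm (by simp)
    (EuclideanSpace.single (Fin.last d) 1)
  simp only [EuclideanSpace.inner_single_right, hA1, v] at hparseval
  simp only [map_one, one_pow, Finset.sum_const, Finset.card_univ, Fintype.card_fin,
    nsmul_eq_mul, mul_one, PiLp.norm_single, norm_one] at hparseval
  rw [hnorm i, ← hparseval]
  push_cast
  ring

theorem norm_projFirst_map_single (hA1 : ∀ i, A (EuclideanSpace.single i 1) (Fin.last d) = 1)
    (hA2 : ∀ x y, ⟪x, y⟫ = 0 → ⟪A x, A y⟫ = 0) (i : Fin (d + 1)) :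
    ‖projFirst d (A (EuclideanSpace.single i 1))‖ = Real.sqrt d := by
  have h := norm_map_single_sq hA1 hA2 i
  rw [norm_sq_eq_norm_projFirst_sq_add, hA1] at h
  rw [← Real.sqrt_sq (norm_nonneg _)]
  congr 1
  linarith

theorem latticeSlice_add_one (hA1 : ∀ i, A (EuclideanSpace.single i 1) (Fin.last d) = 1)
    (c : ℝ) :
    latticeSlice A (c + 1) = {w | ∃ (i : Fin (d + 1)) (x : EuclideanSpace ℝ (Fin d)),
      x ∈ latticeSlice A c ∧ w = projFirst d (A (EuclideanSpace.single i 1)) + x} := by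
  have hstep : ∀ (m : Fin (d + 1) → ℤ) i,
      A (WithLp.toLp 2 (fun j => ((m + Pi.single i 1 : Fin (d + 1) → ℤ) j : ℝ))) =
        A (WithLp.toLp 2 (fun j => (m j : ℝ))) + A (EuclideanSpace.single i 1) := by
    intro m i
    rw [EuclideanSpace.toLp_intCast_add_single, map_add]
  ext w
  constructor
  · rintro ⟨m, hlevel, rfl⟩
    obtain ⟨m, rfl⟩ : ∃ m', m = m' + Pi.single 0 1 := ⟨m - Pi.single 0 1, (sub_add_cancel _ _).symm⟩
    rw [hstep, PiLp.add_apply, hA1, add_left_inj] at hlevel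
    exact ⟨0, _, ⟨m, hlevel, rfl⟩, by rw [hstep, projFirst_add, add_comm]⟩
  · rintro ⟨i, _, ⟨m, hlevel, rfl⟩, rfl⟩
    refine ⟨m + Pi.single i 1, ?_, ?_⟩
    · rw [hstep, PiLp.add_apply, hA1, hlevel]
    · rw [hstep, projFirst_add, add_comm]

end LatticeSlices

theorem stmt_17_general (d : ℕ)
    (A : EuclideanSpace ℝ (Fin (d + 1)) →ₗ[ℝ] EuclideanSpace ℝ (Fin (d + 1)))
    (hA1 : ∀ x : EuclideanSpace ℝ (Fin (d + 1)), (∑ i, x i) = 1 → A x (Fin.last d) = 1)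
    (hA2 : ∀ x y : EuclideanSpace ℝ (Fin (d + 1)), ⟪x, y⟫ = 0 → ⟪A x, A y⟫ = 0) :
    (∀ i : Fin (d + 1),
      ‖projFirst d (A (EuclideanSpace.single i (1 : ℝ)))‖ = Real.sqrt d) ∧
    ∀ k : ℤ,
      {w : EuclideanSpace ℝ (Fin d) | ∃ mm : Fin (d + 1) → ℤ,
          A (WithLp.toLp 2 (fun i => (mm i : ℝ)) : EuclideanSpace ℝ (Fin (d + 1))) (Fin.last d)
              = (k : ℝ) + 1 ∧
          projFirst d (A (WithLp.toLp 2 (fun i => (mm i : ℝ)) : EuclideanSpace ℝ (Fin (d + 1)))) = w}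
        = {w : EuclideanSpace ℝ (Fin d) | ∃ (i : Fin (d + 1))
            (x : EuclideanSpace ℝ (Fin d)),
          (∃ mm : Fin (d + 1) → ℤ,
            A (WithLp.toLp 2 (fun i' => (mm i' : ℝ)) : EuclideanSpace ℝ (Fin (d + 1))) (Fin.last d)
                = (k : ℝ) ∧
            projFirst d (A (WithLp.toLp 2 (fun i' => (mm i' : ℝ)) :
              EuclideanSpace ℝ (Fin (d + 1)))) = x) ∧
          w = projFirst d (A (EuclideanSpace.single i (1 : ℝ))) + x} :=
  ⟨norm_projFirst_map_single (map_single_last hA1) hA2,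
    fun k => latticeSlice_add_one (map_single_last hA1) k⟩

/-- For a linear `A : ℝ^D → ℝ^D`, `D = d+1`, mapping the affine hyperplane
`{Σxᵢ = 1}` into `{last coordinate = 1}` and preserving orthogonality: writing
`A eᵢ = (v'ᵢ, 1)`, each `v'ᵢ` has Euclidean length `√(D-1) = √d`, and the level-`(k+1)`
slice of the lattice `A(ℤ^D)` is obtained from the level-`k` slice by adding some `v'ᵢ`. -/
theorem stmt_17 (d : ℕ) (hd : 0 < d)
    (A : EuclideanSpace ℝ (Fin (d + 1)) →ₗ[ℝ] EuclideanSpace ℝ (Fin (d + 1)))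
    (hA1 : ∀ x : EuclideanSpace ℝ (Fin (d + 1)), (∑ i, x i) = 1 → A x (Fin.last d) = 1)
    (hA2 : ∀ x y : EuclideanSpace ℝ (Fin (d + 1)), ⟪x, y⟫ = 0 → ⟪A x, A y⟫ = 0) :
    (∀ i : Fin (d + 1),
      ‖projFirst d (A (EuclideanSpace.single i (1 : ℝ)))‖ = Real.sqrt d) ∧
    ∀ k : ℤ,
      {w : EuclideanSpace ℝ (Fin d) | ∃ mm : Fin (d + 1) → ℤ,
          A (WithLp.toLp 2 (fun i => (mm i : ℝ)) : EuclideanSpace ℝ (Fin (d + 1))) (Fin.last d)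
              = (k : ℝ) + 1 ∧
          projFirst d (A (WithLp.toLp 2 (fun i => (mm i : ℝ)) : EuclideanSpace ℝ (Fin (d + 1)))) = w}
        = {w : EuclideanSpace ℝ (Fin d) | ∃ (i : Fin (d + 1))
            (x : EuclideanSpace ℝ (Fin d)),
          (∃ mm : Fin (d + 1) → ℤ,
            A (WithLp.toLp 2 (fun i' => (mm i' : ℝ)) : EuclideanSpace ℝ (Fin (d + 1))) (Fin.last d)
                = (k : ℝ) ∧
            projFirst d (A (WithLp.toLp 2 (fun i' => (mm i' : ℝ)) :
              EuclideanSpace ℝ (Fin (d + 1)))) = x) ∧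
          w = projFirst d (A (EuclideanSpace.single i (1 : ℝ))) + x} :=
  stmt_17_general d A hA1 hA2
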